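/- arXiv:2201.00078 — 2 statements merged into one kernel-verified Lean document; each statement's English description precedes it below -/
import Mathlib

section
/- Let c = gcd(n,k) and l = n/c with l even. Then the set S consisting of u_0 together with all vertices v_{j+ik} for 0 ≤ j ≤ c−1 and 0 ≤ i ≤ l−1 with i odd is a P3-hull set of G(n,k) of cardinality n/2 + 1 = ⌈(n+1)/2⌉. -/
open SimpleGraph
open Fin.NatCast

def infectStep {V : Type*} (G : SimpleGraph V) (S : Set V) : Set V :=
  S ∪ {v | ∃ a b, a ≠ b ∧ a ∈ S ∧ b ∈ S ∧ G.Adj v a ∧ G.Adj v b}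

def infectIter {V : Type*} (G : SimpleGraph V) (S : Set V) : ℕ → Set V
  | 0 => S
  | p + 1 => infectStep G (infectIter G S p)

def IsHullSet {V : Type*} (G : SimpleGraph V) (S : Set V) : Prop :=
  ∃ p, infectIter G S p = Set.univ

noncomputable def hullNumber {V : Type*} (G : SimpleGraph V) : ℕ :=
  sInf {m | ∃ S : Set V, S.ncard = m ∧ IsHullSet G S}

noncomputable def infectTime {V : Type*} (G : SimpleGraph V) (S : Set V) : ℕ :=
  sInf {p | infectIter G S p = Set.univ}

def IsCubic {V : Type*} (G : SimpleGraph V) : Prop :=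
  ∀ v, {w | G.Adj v w}.ncard = 3

def IsDecyclingSet {V : Type*} (G : SimpleGraph V) (S : Set V) : Prop :=
  (G.induce Sᶜ).IsAcyclic

noncomputable def decyclingNumber {V : Type*} (G : SimpleGraph V) : ℕ :=
  sInf {m | ∃ S : Set V, S.ncard = m ∧ IsDecyclingSet G S}

def pHull {V : Type*} (G : SimpleGraph V) (S : Set V) : Set V :=
  ⋃ p, infectIter G S p

noncomputable def graphDiam {V : Type*} (G : SimpleGraph V) : ℕ :=
  sSup {d | ∃ a b, d = G.dist a b}

noncomputable def maxCompDiam {V : Type*} (G : SimpleGraph V) : ℕ :=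
  sSup {d | ∃ c : G.ConnectedComponent, d = graphDiam (G.induce c.supp)}

def genPetersen (n k : ℕ) [NeZero n] : SimpleGraph (Fin n ⊕ Fin n) :=
  SimpleGraph.fromRel fun x y =>
    match x, y with
    | Sum.inl i, Sum.inl j => j = i + 1
    | Sum.inl i, Sum.inr j => i = j
    | Sum.inr i, Sum.inr j => j = i + (k : Fin n)
    | _, _ => False

def Sv (n k : ℕ) [NeZero n] : Set (Fin n ⊕ Fin n) :=
  {x | ∃ i j : ℕ, i < n / Nat.gcd n k ∧ j < Nat.gcd n k ∧ Odd i ∧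
    x = Sum.inr ((j + i * k : ℕ) : Fin n)}

def SuOdd (n c : ℕ) [NeZero n] : Set (Fin n ⊕ Fin n) :=
  {Sum.inl ((c - 1 : ℕ) : Fin n)} ∪
    {x | ∃ j : ℕ, j < c ∧ Even j ∧ x = Sum.inl ((j : ℕ) : Fin n)}

/-! Each inner cycle `V_j` has even length `l = n / gcd n k` and `S` contains every second vertex
of it, so in the first round every other inner vertex sees its two cycle neighbours `v_{t ± k}`
infected; they are distinct because `2k ≢ 0 (mod n)`. With all of `v_0, …, v_{n-1}` infected,
the infection walks around the outer cycle from `u_0`, since `u_{m+1}` is adjacent to `u_m` and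
`v_{m+1}`. For the size, translation by `k` maps the vertices of `S` on the inner cycles
bijectively onto the remaining inner vertices, so there are `n / 2` of them. -/

lemma Nat.dvd_div_gcd_mul (n k : ℕ) : n ∣ n / Nat.gcd n k * k :=
  ⟨k / Nat.gcd n k, by
    rw [← Nat.mul_div_assoc _ (Nat.gcd_dvd_right n k),
      Nat.div_mul_right_comm (Nat.gcd_dvd_left n k)]⟩

lemma Fin.natCast_eq_natCast_iff_modEq {n : ℕ} [NeZero n] {a b : ℕ} :
    (a : Fin n) = b ↔ a ≡ b [MOD n] := by
  simp [Fin.ext_iff, Fin.val_natCast, Nat.ModEq]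

section Infection

variable {V : Type*} (G : SimpleGraph V) (S : Set V)

lemma subset_infectStep : S ⊆ infectStep G S :=
  Set.subset_union_left

lemma infectIter_monotone : Monotone (infectIter G S) :=
  monotone_nat_of_le_succ fun _ => subset_infectStep G _

end Infection

section Representation

/-! Every `t : Fin n` is `j + i * k` with `j < gcd n k`; here `j` is unique and `i` is unique
modulo `n / gcd n k`, so `j` names the inner cycle `V_j` through `v_t` and `i` the position of
`v_t` on it. -/

lemma exists_natCast_add_mul_eq (n k : ℕ) [NeZero n] (t : Fin n) :
    ∃ i j : ℕ, j < Nat.gcd n k ∧ ((j + i * k : ℕ) : Fin n) = t := by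
  have hn := Nat.pos_of_neZero n
  obtain ⟨i₀, hi₀⟩ : ∃ i₀, i₀ * k ≡ Nat.gcd n k [MOD n] := by
    rcases (Nat.gcd_le_left k hn).lt_or_eq with hlt | heq
    · obtain ⟨m, -, hm⟩ := Nat.exists_mul_mod_eq_gcd (n := k) (k := n) (by rwa [Nat.gcd_comm])
      refine ⟨m, ?_⟩
      rw [Nat.ModEq, mul_comm, hm, Nat.gcd_comm, Nat.mod_eq_of_lt hlt]
    · exact ⟨0, by rw [heq, zero_mul]; exact (Nat.modEq_zero_iff_dvd.2 dvd_rfl).symm⟩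
  refine ⟨i₀ * (t / Nat.gcd n k), t % Nat.gcd n k,
    Nat.mod_lt _ (Nat.gcd_pos_of_pos_left k hn), ?_⟩
  conv_rhs => rw [← Fin.cast_val_eq_self t, ← Nat.mod_add_div t (Nat.gcd n k)]
  rw [Fin.natCast_eq_natCast_iff_modEq, mul_right_comm]
  exact (hi₀.mul_right _).add_left _

variable {n k : ℕ} [NeZero n]

lemma modEq_of_natCast_add_mul_eq {i i' j j' : ℕ} (hj : j < Nat.gcd n k)
    (hj' : j' < Nat.gcd n k) (h : ((j + i * k : ℕ) : Fin n) = ((j' + i' * k : ℕ) : Fin n)) :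
    j = j' ∧ i ≡ i' [MOD n / Nat.gcd n k] := by
  rw [Fin.natCast_eq_natCast_iff_modEq] at h
  have hk : k ≡ 0 [MOD Nat.gcd n k] := Nat.modEq_zero_iff_dvd.2 (Nat.gcd_dvd_right n k)
  have hjj : j = j' := by
    have h1 := (hk.mul_left i).add_left j
    have h2 := (hk.mul_left i').add_left j'
    simp only [mul_zero, add_zero] at h1 h2
    exact (h1.symm.trans ((h.of_dvd (Nat.gcd_dvd_left n k)).trans h2)).eq_of_lt_of_lt hj hj'
  subst hjj
  exact ⟨rfl, Nat.ModEq.cancel_right_div_gcd (Nat.pos_of_neZero n) (h.add_left_cancel' j)⟩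

lemma inr_natCast_add_mul_mem_Sv_iff (hl : Even (n / Nat.gcd n k)) {i j : ℕ}
    (hj : j < Nat.gcd n k) : Sum.inr ((j + i * k : ℕ) : Fin n) ∈ Sv n k ↔ Odd i := by
  have h2l : 2 ∣ n / Nat.gcd n k := even_iff_two_dvd.1 hl
  constructor
  · rintro ⟨i', j', -, hj', hi', h⟩
    have hii' := (modEq_of_natCast_add_mul_eq hj hj' (Sum.inr_injective h)).2.of_dvd h2l
    exact Nat.odd_iff.2 (Eq.trans hii' (Nat.odd_iff.1 hi'))
  · intro hi
    refine ⟨i % (n / Nat.gcd n k), j,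
      Nat.mod_lt _ (Nat.div_gcd_pos_of_pos_left k (Nat.pos_of_neZero n)), hj,
      Nat.odd_iff.2 ((Nat.mod_mod_of_dvd i h2l).trans (Nat.odd_iff.1 hi)), ?_⟩
    rw [Sum.inr.injEq, Fin.natCast_eq_natCast_iff_modEq]
    exact ((((Nat.mod_modEq i _).mul_right' k).of_dvd (Nat.dvd_div_gcd_mul n k)).add_left j).symm

end Representation

section GenPetersen

variable {n k : ℕ} [NeZero n]

lemma genPetersen_adj_inl_inr (t : Fin n) :
    (genPetersen n k).Adj (Sum.inl t) (Sum.inr t) := by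
  rw [genPetersen, SimpleGraph.fromRel_adj]
  exact ⟨Sum.inl_ne_inr, Or.inl rfl⟩

lemma genPetersen_adj_inl_add_one (hn : n ≠ 1) (t : Fin n) :
    (genPetersen n k).Adj (Sum.inl t) (Sum.inl (t + 1)) := by
  have h1 : ((1 : ℕ) : Fin n) ≠ 0 := by rwa [ne_eq, Fin.natCast_eq_zero, Nat.dvd_one]
  rw [genPetersen, SimpleGraph.fromRel_adj]
  exact ⟨by simpa using h1, Or.inl rfl⟩

lemma genPetersen_adj_inr_add (hk : ¬ n ∣ k) (t : Fin n) :
    (genPetersen n k).Adj (Sum.inr t) (Sum.inr (t + k)) := by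
  have hk0 : (k : Fin n) ≠ 0 := by rwa [ne_eq, Fin.natCast_eq_zero]
  rw [genPetersen, SimpleGraph.fromRel_adj]
  exact ⟨by simpa using hk0, Or.inl rfl⟩

lemma inr_mem_infectStep_of_Sv_subset (hl : Even (n / Nat.gcd n k)) (h2k : ¬ n ∣ 2 * k)
    {S : Set (Fin n ⊕ Fin n)} (hS : Sv n k ⊆ S) (t : Fin n) :
    Sum.inr t ∈ infectStep (genPetersen n k) S := by
  have hk : ¬ n ∣ k := fun h => h2k (h.mul_left 2)
  obtain ⟨i, j, hj, rfl⟩ := exists_natCast_add_mul_eq n k t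
  have hmem {i : ℕ} (hi : Odd i) : Sum.inr ((j + i * k : ℕ) : Fin n) ∈ S :=
    hS ((inr_natCast_add_mul_mem_Sv_iff hl hj).2 hi)
  obtain hi | hi := (Nat.even_or_odd i).symm
  · exact subset_infectStep _ _ (hmem hi)
  obtain ⟨i', hi'⟩ : ∃ i', i' + 1 = i + n / Nat.gcd n k :=
    ⟨i + n / Nat.gcd n k - 1, by
      have := Nat.div_gcd_pos_of_pos_left k (Nat.pos_of_neZero n); omega⟩
  have hi'_odd : Odd i' := by
    rw [← Nat.not_even_iff_odd, ← Nat.even_add_one, hi']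
    exact hi.add hl
  have hnext : ((j + (i + 1) * k : ℕ) : Fin n) = ((j + i * k : ℕ) : Fin n) + k := by
    open Fin.CommRing in push_cast; ring
  have hprev : ((j + i' * k : ℕ) : Fin n) + k = ((j + i * k : ℕ) : Fin n) := by
    have hlk : ((n / Nat.gcd n k * k : ℕ) : Fin n) = 0 :=
      Fin.natCast_eq_zero.2 (Nat.dvd_div_gcd_mul n k)
    have h : ((j + (i' + 1) * k : ℕ) : Fin n) =
        ((j + (i + n / Nat.gcd n k) * k : ℕ) : Fin n) := by
      rw [hi']
    open Fin.CommRing in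
    push_cast at hlk h ⊢
    linear_combination h + hlk
  refine Or.inr ⟨_, _, ?_, hmem hi.add_one, hmem hi'_odd,
    hnext ▸ genPetersen_adj_inr_add hk _, hprev ▸ (genPetersen_adj_inr_add hk _).symm⟩
  rw [ne_eq, Sum.inr.injEq, hnext, ← hprev, add_assoc, add_eq_left, ← Nat.cast_add, ← two_mul,
    Fin.natCast_eq_zero]
  exact h2k

lemma inl_natCast_mem_infectIter (hn : n ≠ 1) {S : Set (Fin n ⊕ Fin n)} (h0 : Sum.inl 0 ∈ S)
    (hv : ∀ t, Sum.inr t ∈ infectIter (genPetersen n k) S 1) (m : ℕ) :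
    Sum.inl (m : Fin n) ∈ infectIter (genPetersen n k) S (m + 1) := by
  induction m with
  | zero => exact subset_infectStep _ _ (by rw [Nat.cast_zero]; exact h0)
  | succ m ih =>
    refine Or.inr ⟨Sum.inl m, Sum.inr (m + 1 : ℕ), Sum.inl_ne_inr, ih,
      infectIter_monotone _ _ (Nat.le_add_left 1 m) (hv _), ?_, genPetersen_adj_inl_inr _⟩
    simpa using (genPetersen_adj_inl_add_one hn (m : Fin n)).symm

lemma isHullSet_genPetersen (hl : Even (n / Nat.gcd n k)) (h2k : ¬ n ∣ 2 * k) :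
    IsHullSet (genPetersen n k) ({Sum.inl 0} ∪ Sv n k) := by
  have hn : n ≠ 1 := by rintro rfl; exact h2k (one_dvd _)
  have hv := inr_mem_infectStep_of_Sv_subset hl h2k (Set.subset_union_right (s := {Sum.inl 0}))
  refine ⟨n, Set.eq_univ_of_forall ?_⟩
  rintro (t | t)
  · rw [← Fin.cast_val_eq_self t]
    exact infectIter_monotone _ _ t.isLt (inl_natCast_mem_infectIter hn (Or.inl rfl) hv t)
  · exact infectIter_monotone _ _ NeZero.one_le (hv t)

lemma ncard_Sv (hl : Even (n / Nat.gcd n k)) : (Sv n k).ncard = n / 2 := by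
  set O : Set (Fin n) := {t | Sum.inr t ∈ Sv n k}
  have hSv : Sv n k = Sum.inr '' O := by
    ext x
    refine ⟨fun hx => ?_, fun ⟨t, ht, hx⟩ => hx ▸ ht⟩
    obtain ⟨i, j, -, -, -, rfl⟩ := id hx
    exact ⟨_, hx, rfl⟩
  have hshift : (· + (k : Fin n)) ⁻¹' O = Oᶜ := by
    ext t
    obtain ⟨i, j, hj, rfl⟩ := exists_natCast_add_mul_eq n k t
    have hnext : ((j + i * k : ℕ) : Fin n) + k = ((j + (i + 1) * k : ℕ) : Fin n) := by
      open Fin.CommRing in push_cast; ring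
    simp only [Set.mem_preimage, Set.mem_compl_iff, O, Set.mem_ofPred_eq, hnext,
      inr_natCast_add_mul_mem_Sv_iff hl hj, Nat.odd_add_one]
  have hcard := Set.ncard_add_ncard_compl O
  rw [← hshift, Set.ncard_preimage_of_injective_subset_range (add_left_injective (k : Fin n))
      (fun t _ => ⟨t - k, sub_add_cancel t (k : Fin n)⟩),
    Nat.card_eq_fintype_card, Fintype.card_fin] at hcard
  rw [hSv, Set.ncard_image_of_injective _ Sum.inr_injective]
  omega

end GenPetersen

theorem stmt6 (n k : ℕ) [NeZero n] (hk1 : 1 ≤ k) (hk2 : 2 * k < n)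
    (hl : Even (n / Nat.gcd n k)) :
    IsHullSet (genPetersen n k) ({Sum.inl 0} ∪ Sv n k) ∧
    ({Sum.inl 0} ∪ Sv n k : Set (Fin n ⊕ Fin n)).ncard = n / 2 + 1 ∧
    n / 2 + 1 = (n + 2) / 2 := by
  have h2k : ¬ n ∣ 2 * k := Nat.not_dvd_of_pos_of_lt (by omega) hk2
  have hu : Sum.inl 0 ∉ Sv n k := fun ⟨_, _, _, _, _, h⟩ => Sum.inl_ne_inr h
  refine ⟨isHullSet_genPetersen hl h2k, ?_, by omega⟩
  rw [Set.singleton_union, Set.ncard_insert_of_notMem hu, ncard_Sv hl]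
end

section
/- Let n ≥ 3 be odd and S a minimum size P3-hull set of the prism graph G(n,1). Then for each i with 0 ≤ i ≤ (n−1)/2, after suitable relabeling of indices, the set {u_{2i}, v_{2i}} contains exactly one element of S, and no two elements of S are adjacent. -/
open SimpleGraph
open Fin.NatCast

/-!
A set `D` disjoint from `S` in which every vertex has at most one neighbour outside `D` is
never infected. Applied to a square face, this shows that every face meets a hull set, so no two
cyclically consecutive columns `{u_j, v_j}` are free of `S`. As `n` is odd, at least `(n + 1) / 2`
columns are then occupied; hence for a hull set of that size every column holds at most one
element of `S`, the occupied columns are `t, t + 2, …, t + n - 1`, and `(t - 1, t)` is the only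
pair of consecutive occupied columns. Were the elements of `S` in these two columns on the same
cycle, `S` would contain no two opposite corners of a face, and the vertices outside `S` with a
neighbour outside `S` on their own cycle would form such a set `D`. So they lie on different
cycles, which makes `S` independent, and rotating by `-t` gives the relabelling.
-/

theorem disjoint_infectIter_of_closed {V : Type*} (G : SimpleGraph V) {S D : Set V}
    (hDS : Disjoint D S) (hD : ∀ v ∈ D, (G.neighborSet v \ D).Subsingleton) (p : ℕ) :
    Disjoint D (infectIter G S p) := by
  induction p with
  | zero => exact hDS
  | succ p ih =>
    refine Set.disjoint_left.2 fun v hv hinf => ?_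
    rcases hinf with hv' | ⟨a, b, hab, ha, hb, hva, hvb⟩
    · exact Set.disjoint_left.1 ih hv hv'
    · exact hab <| hD v hv ⟨hva, Set.disjoint_right.1 ih ha⟩ ⟨hvb, Set.disjoint_right.1 ih hb⟩

theorem not_isHullSet_of_closed {V : Type*} (G : SimpleGraph V) {S D : Set V}
    (hne : D.Nonempty) (hDS : Disjoint D S)
    (hD : ∀ v ∈ D, (G.neighborSet v \ D).Subsingleton) : ¬ IsHullSet G S := by
  rintro ⟨p, hp⟩
  have := disjoint_infectIter_of_closed G hDS hD p
  rw [hp, Set.disjoint_univ] at this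
  exact hne.ne_empty this

theorem ncard_sep_sub_mem_add_ncard_compl {G : Type*} [AddGroup G] [Finite G] {O : Set G}
    {g : G} (hO : ∀ j, j ∈ O ∨ j + g ∈ O) :
    {j ∈ O | j - g ∈ O}.ncard + Oᶜ.ncard = O.ncard := by
  rw [← Set.ncard_inter_add_ncard_sdiff_eq_ncard O {j | j - g ∈ O},
    ← Set.ncard_image_of_injective Oᶜ (add_left_injective g)]
  congr 2
  ext j
  simp only [Set.mem_image, Set.mem_compl_iff, Set.mem_sdiff,
    ← eq_sub_iff_add_eq, exists_eq_right]
  exact ⟨fun h => ⟨by simpa using (hO (j - g)).resolve_left h, h⟩, fun h => h.2⟩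

open Fin.CommRing in
theorem natCast_two_mul_add_mem {n : ℕ} [NeZero n] {O : Set (Fin n)} {t : Fin n}
    (hO : ∀ j, j ∈ O ∨ j + 1 ∈ O) (ht : t ∈ O) (huniq : ∀ j ∈ O, j - 1 ∈ O → j = t)
    {i : ℕ} (hi : 2 * i < n) : ((2 * i : ℕ) : Fin n) + t ∈ O := by
  induction i with
  | zero => simpa using ht
  | succ i ih =>
    have hodd : ((2 * i + 1 : ℕ) : Fin n) + t ∉ O := fun h => by
      have h0 : ((2 * i + 1 : ℕ) : Fin n) = 0 := by
        simpa using huniq _ h (by simpa [add_sub_right_comm] using ih (by omega))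
      have := Nat.le_of_dvd (Nat.succ_pos _) (Fin.natCast_eq_zero.1 h0)
      omega
    convert (hO _).resolve_left hodd using 1
    push_cast
    ring

namespace genPetersen

variable {n : ℕ}

-- `Sum.inl j` is `u_j` and `Sum.inr j` is `v_j`; `Sum.swap` follows the spoke `u_j v_j`.
def shift (r : Fin n) : Fin n ⊕ Fin n → Fin n ⊕ Fin n := Sum.map (· + r) (· + r)

def column : Fin n ⊕ Fin n → Fin n := Sum.elim id id

@[simp] theorem shift_inl (r i : Fin n) : shift r (.inl i) = .inl (i + r) := rfl

@[simp] theorem shift_inr (r i : Fin n) : shift r (.inr i) = .inr (i + r) := rfl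

@[simp] theorem shift_shift (r s : Fin n) (v : Fin n ⊕ Fin n) :
    shift r (shift s v) = shift (s + r) v := by
  cases v <;> simp [add_assoc]

@[simp] theorem shift_zero [NeZero n] (v : Fin n ⊕ Fin n) : shift 0 v = v := by
  cases v <;> simp

@[simp] theorem shift_swap (r : Fin n) (v : Fin n ⊕ Fin n) :
    shift r v.swap = (shift r v).swap := by
  cases v <;> rfl

@[simp] theorem column_shift (r : Fin n) (v : Fin n ⊕ Fin n) :
    column (shift r v) = column v + r := by
  cases v <;> rfl

@[simp] theorem column_swap (v : Fin n ⊕ Fin n) : column v.swap = column v := by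
  cases v <;> rfl

theorem mem_image_column {S : Set (Fin n ⊕ Fin n)} {j : Fin n} :
    j ∈ column '' S ↔ .inl j ∈ S ∨ .inr j ∈ S := by
  constructor
  · rintro ⟨v | v, hv, rfl⟩
    exacts [.inl hv, .inr hv]
  · rintro (h | h)
    exacts [⟨_, h, rfl⟩, ⟨_, h, rfl⟩]

theorem swap_not_mem_of_injOn_column {S : Set (Fin n ⊕ Fin n)} (hinj : Set.InjOn column S)
    {v : Fin n ⊕ Fin n} (hv : v ∈ S) : v.swap ∉ S := fun hsw => by
  cases v <;> simpa using hinj hsw hv (column_swap _)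

variable [NeZero n]

def rotate (k : ℕ) (r : Fin n) : genPetersen n k ≃g genPetersen n k where
  toEquiv := Equiv.sumCongr (Equiv.addRight r) (Equiv.addRight r)
  map_rel_iff' {v w} := by
    cases v <;> cases w <;> simp [genPetersen, add_right_comm _ r]

theorem mem_image_rotate {k : ℕ} {r : Fin n} {S : Set (Fin n ⊕ Fin n)} {v : Fin n ⊕ Fin n} :
    v ∈ rotate k r '' S ↔ shift (-r) v ∈ S := by
  rw [RelIso.image_eq_preimage_symm]
  rfl

theorem prism_adj_iff (hn : 2 ≤ n) {v w : Fin n ⊕ Fin n} :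
    (genPetersen n 1).Adj v w ↔ w = shift 1 v ∨ w = shift (-1) v ∨ w = v.swap := by
  have h1 : (1 : Fin n) ≠ 0 := by simp [Fin.ext_iff, Nat.mod_eq_of_lt hn]
  have hcycle (i j : Fin n) : ¬i = j ∧ (j = i + 1 ∨ i = j + 1) ↔ j = i + 1 ∨ j = i + -1 := by
    constructor
    · rintro ⟨-, rfl | rfl⟩ <;> simp
    · rintro (rfl | rfl) <;> simp [h1, eq_comm (a := i)]
  cases v <;> cases w <;> simp [genPetersen, hcycle, eq_comm]

theorem prism_not_isHullSet_of_closed (hn : 2 ≤ n) {S D : Set (Fin n ⊕ Fin n)}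
    (hne : D.Nonempty) (hDS : Disjoint D S)
    (hD : ∀ v ∈ D, v.swap ∈ D ∧ (shift 1 v ∈ D ∨ shift (-1) v ∈ D) ∨
      shift 1 v ∈ D ∧ shift (-1) v ∈ D) :
    ¬ IsHullSet (genPetersen n 1) S := by
  refine not_isHullSet_of_closed _ hne hDS fun v hv a ⟨ha, haD⟩ b ⟨hb, hbD⟩ => ?_
  rw [mem_neighborSet, prism_adj_iff hn] at ha hb
  grind

theorem prism_face_meets_isHullSet (hn : 2 ≤ n) {S : Set (Fin n ⊕ Fin n)}
    (hS : IsHullSet (genPetersen n 1) S) (v : Fin n ⊕ Fin n) :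
    v ∈ S ∨ v.swap ∈ S ∨ shift 1 v ∈ S ∨ (shift 1 v).swap ∈ S := by
  by_contra! h
  refine prism_not_isHullSet_of_closed hn (D := {v, v.swap, shift 1 v, (shift 1 v).swap})
    ⟨v, by simp⟩ ?_ ?_ hS
  · simp [Set.disjoint_left, h]
  · simp

theorem prism_not_isHullSet_of_no_diagonal (hn : 2 ≤ n) {S : Set (Fin n ⊕ Fin n)}
    (hne : S.Nonempty) (hcol : ∀ v ∈ S, v.swap ∉ S) (hdiag : ∀ v ∈ S, (shift 1 v).swap ∉ S) :
    ¬ IsHullSet (genPetersen n 1) S := by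
  have hdiag' : ∀ v ∈ S, (shift (-1) v).swap ∉ S := fun v hv h =>
    hdiag _ h (by simpa using hv)
  obtain ⟨v, hv⟩ := hne
  refine prism_not_isHullSet_of_closed hn
    (D := {v | v ∉ S ∧ (shift (-1) v ∉ S ∨ shift 1 v ∉ S)})
    ⟨v.swap, hcol v hv, .inr (by simpa using hdiag v hv)⟩
    (Set.disjoint_left.2 fun _ hv => hv.1) ?_
  rintro w ⟨hw, hw'⟩
  by_cases hprev : shift (-1) w ∈ S
  · have hnext : shift 1 w ∉ S := hw'.resolve_left (not_not.2 hprev)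
    exact .inl ⟨⟨by simpa using hdiag _ hprev, .inl (by simpa using hcol _ hprev)⟩,
      .inl ⟨hnext, .inl (by simpa using hw)⟩⟩
  by_cases hnext : shift 1 w ∈ S
  · exact .inl ⟨⟨by simpa using hdiag' _ hnext, .inr (by simpa using hcol _ hnext)⟩,
      .inr ⟨hprev, .inr (by simpa using hw)⟩⟩
  · exact .inr ⟨⟨hnext, .inl (by simpa using hw)⟩, ⟨hprev, .inr (by simpa using hw)⟩⟩

theorem prism_column_mem_or_succ_mem (hn : 2 ≤ n) {S : Set (Fin n ⊕ Fin n)}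
    (hS : IsHullSet (genPetersen n 1) S) (j : Fin n) :
    j ∈ column '' S ∨ j + 1 ∈ column '' S := by
  rcases prism_face_meets_isHullSet hn hS (.inl j) with h | h | h | h
  exacts [.inl ⟨_, h, rfl⟩, .inl ⟨_, h, rfl⟩, .inr ⟨_, h, rfl⟩, .inr ⟨_, h, rfl⟩]

theorem prism_columns_of_ncard_eq (hn : 2 ≤ n) (hodd : Odd n) {S : Set (Fin n ⊕ Fin n)}
    (hS : IsHullSet (genPetersen n 1) S) (hcard : S.ncard = (n + 1) / 2) :
    Set.InjOn column S ∧ ∃! t, t ∈ column '' S ∧ t - 1 ∈ column '' S := by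
  set O := column '' S
  have hpairs : {j ∈ O | j - 1 ∈ O}.ncard + Oᶜ.ncard = O.ncard :=
    ncard_sep_sub_mem_add_ncard_compl (prism_column_mem_or_succ_mem hn hS)
  have htotal : Oᶜ.ncard + O.ncard = n := by simpa using Set.ncard_compl_add_ncard O
  have hle : O.ncard ≤ S.ncard := Set.ncard_image_le
  obtain ⟨m, rfl⟩ := hodd
  have hOS : O.ncard = S.ncard := by omega
  obtain ⟨t, ht⟩ := Set.ncard_eq_one.1 (show {j ∈ O | j - 1 ∈ O}.ncard = 1 by omega)
  refine ⟨Set.injOn_of_ncard_image_eq hOS, t, ?_, fun j hj => ?_⟩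
  · exact (Set.ext_iff.1 ht t).2 rfl
  · exact (Set.ext_iff.1 ht j).1 hj

theorem prism_not_adj_of_ncard_eq (hn : 2 ≤ n) (hodd : Odd n) {S : Set (Fin n ⊕ Fin n)}
    (hS : IsHullSet (genPetersen n 1) S) (hcard : S.ncard = (n + 1) / 2) :
    ∀ a ∈ S, ∀ b ∈ S, ¬ (genPetersen n 1).Adj a b := by
  obtain ⟨hinj, t, -, huniq⟩ := prism_columns_of_ncard_eq hn hodd hS hcard
  have hcol : ∀ v ∈ S, v.swap ∉ S := fun v hv => swap_not_mem_of_injOn_column hinj hv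
  have hconsecutive {v w : Fin n ⊕ Fin n} (hv : v ∈ S) (hw : w ∈ S)
      (hvw : column w = column v + 1) : column v + 1 = t :=
    hvw ▸ huniq _ ⟨⟨w, hw, rfl⟩, by simpa [hvw] using Set.mem_image_of_mem column hv⟩
  have hsucc : ∀ v ∈ S, shift 1 v ∉ S := by
    intro v hv hv1
    refine prism_not_isHullSet_of_no_diagonal hn ⟨v, hv⟩ hcol (fun w hw hw1 => ?_) hS
    have hwv : w = v := hinj hw hv <| add_right_cancel <|
      (hconsecutive hw hw1 (by simp)).trans (hconsecutive hv hv1 (by simp)).symm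
    exact hcol _ hv1 (hwv ▸ hw1)
  intro a ha b hb hab
  rcases (prism_adj_iff hn).1 hab with h | h | h <;> subst h
  · exact hsucc a ha hb
  · exact hsucc _ hb (by simpa using ha)
  · exact hcol a ha hb

end genPetersen

open genPetersen in
theorem stmt13 (n : ℕ) [NeZero n] (hn : 3 ≤ n) (hodd : Odd n)
    (S : Set (Fin n ⊕ Fin n)) (hS : IsHullSet (genPetersen n 1) S)
    (hcard : S.ncard = (n + 1) / 2) :
    (∀ a ∈ S, ∀ b ∈ S, ¬ (genPetersen n 1).Adj a b) ∧
    ∃ φ : genPetersen n 1 ≃g genPetersen n 1,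
      ∀ i : ℕ, i ≤ (n - 1) / 2 →
        Xor' (Sum.inl ((2 * i : ℕ) : Fin n) ∈ ⇑φ '' S)
             (Sum.inr ((2 * i : ℕ) : Fin n) ∈ ⇑φ '' S) := by
  have hn2 : 2 ≤ n := by omega
  obtain ⟨hinj, t, ⟨ht, -⟩, huniq⟩ := prism_columns_of_ncard_eq hn2 hodd hS hcard
  refine ⟨prism_not_adj_of_ncard_eq hn2 hodd hS hcard, rotate 1 (-t), fun i hi => ?_⟩
  have hocc := natCast_two_mul_add_mem (prism_column_mem_or_succ_mem hn2 hS) ht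
    (fun j hj hj1 => huniq j ⟨hj, hj1⟩) (show 2 * i < n by omega)
  rw [mem_image_rotate, mem_image_rotate, neg_neg, shift_inl, shift_inr]
  exact (xor_iff_or_and_not_and _ _).2
    ⟨mem_image_column.1 hocc, fun h => swap_not_mem_of_injOn_column hinj h.1 h.2⟩
end
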